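/- (Lemma 1.) Suppose θ̃ : [t₀, ∞) → ℝᴺ is differentiable and satisfies θ̃'(t) = −k_θ Γ(t) 𝒢(t) θ̃(t), where k_θ > 0, β₁ ≥ 0, the matrices 𝒢(t) ∈ ℝ^{N×N} are symmetric positive semidefinite for all t, and Γ : [t₀, ∞) → ℝ^{N×N} is differentiable, symmetric, satisfies Γ̇(t) = β₁ Γ(t) − k_θ Γ(t) 𝒢(t) Γ(t), and satisfies γ̲ I ⪯ Γ(t) ⪯ γ̄ I for all t, with constants 0 < γ̲ ≤ γ̄. Then for all t ≥ t₀, ‖θ̃(t)‖ ≤ √( γ̄ · θ̃(t₀)ᵀ Γ(t₀)⁻¹ θ̃(t₀) ). -/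

import Mathlib

/-!
`V(t) = θ̃ᵀ Γ⁻¹ θ̃` is a Lyapunov function. The inverse of the gain obeys the linear law
`(Γ⁻¹)' = k_θ 𝒢 - β₁ Γ⁻¹`, so along the error dynamics `V' = -β₁ V - k_θ θ̃ᵀ 𝒢 θ̃ ≤ 0`.
On the other hand `Γ ⪯ γ̄ I` and the Cauchy–Schwarz inequality for the form `⟪Γ ·, ·⟫`, applied
to `Γ⁻¹ θ̃` and `θ̃`, give `‖θ̃‖² ≤ γ̄ V(t) ≤ γ̄ V(t₀)`.
-/

open Set
attribute [local instance] Matrix.normedAddCommGroup Matrix.normedSpace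

open scoped RealInnerProductSpace
open Matrix

theorem map_ringInverse {M₀ N₀ F : Type*} [MonoidWithZero M₀] [MonoidWithZero N₀]
    [EquivLike F M₀ N₀] [MulEquivClass F M₀ N₀] (e : F) (x : M₀) :
    e (Ring.inverse x) = Ring.inverse (e x) := by
  by_cases hx : IsUnit x
  · lift x to M₀ˣ using hx
    simpa using (Ring.inverse_unit (Units.map (e : M₀ →* N₀) x)).symm
  · rw [Ring.inverse_non_unit x hx, Ring.inverse_non_unit _ (by rwa [MulEquiv.isUnit_map]),
      map_zero]

theorem HasDerivWithinAt.ringInverse {R : Type*} [NormedRing R] [HasSummableGeomSeries R]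
    [NormedAlgebra ℝ R] {f : ℝ → R} {f' : R} {s : Set ℝ} {t : ℝ}
    (hf : HasDerivWithinAt f f' s t) (ht : IsUnit (f t)) :
    HasDerivWithinAt (fun τ => Ring.inverse (f τ))
      (-(Ring.inverse (f t) * f' * Ring.inverse (f t))) s t := by
  obtain ⟨u, hu⟩ := ht
  have hinv := hasFDerivAt_ringInverse (𝕜 := ℝ) u
  rw [hu] at hinv
  simpa [Function.comp_def, ← Ring.inverse_unit u, hu] using hinv.comp_hasDerivWithinAt t hf

theorem antitoneOn_Ici_of_hasDerivWithinAt_nonpos {f f' : ℝ → ℝ} {a : ℝ}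
    (hf : ∀ t ∈ Ici a, HasDerivWithinAt f (f' t) (Ici a) t) (hf' : ∀ t ∈ Ioi a, f' t ≤ 0) :
    AntitoneOn f (Ici a) := by
  refine antitoneOn_of_hasDerivWithinAt_nonpos (f' := f') (convex_Ici a)
    (fun t ht => (hf t ht).continuousWithinAt) ?_ ?_ <;> simp only [interior_Ici]
  · exact fun t ht => (hf t (Ioi_subset_Ici_self ht)).mono Ioi_subset_Ici_self
  · exact hf'

section PositiveOperator

variable {E : Type*} [NormedAddCommGroup E] [InnerProductSpace ℝ E]

theorem LinearMap.IsPositive.real_inner_map_sq_le {T : E →ₗ[ℝ] E} (hT : T.IsPositive)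
    (x y : E) : ⟪T x, y⟫ ^ 2 ≤ ⟪T x, x⟫ * ⟪T y, y⟫ := by
  have hquad : ∀ s : ℝ, 0 ≤ ⟪T y, y⟫ * (s * s) + 2 * ⟪T x, y⟫ * s + ⟪T x, x⟫ := by
    intro s
    have h := hT.inner_nonneg_left (x + s • y)
    have hsymm : ⟪T y, x⟫ = ⟪T x, y⟫ := by rw [hT.isSymmetric y x, real_inner_comm]
    simp only [map_add, map_smul, inner_add_left, inner_add_right, real_inner_smul_left,
      real_inner_smul_right, hsymm] at h
    linarith
  have := discrim_le_zero hquad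
  rw [discrim] at this
  linarith

theorem LinearMap.IsPositive.norm_sq_le_mul_inner_of_le_smul_one {T S : E →ₗ[ℝ] E} {c : ℝ}
    (hT : T.IsPositive) (hTc : T ≤ c • 1) (hTS : ∀ x, T (S x) = x) (x : E) :
    ‖x‖ ^ 2 ≤ c * ⟪x, S x⟫ := by
  have hCS := hT.real_inner_map_sq_le (S x) x
  rw [hTS, real_inner_self_eq_norm_sq] at hCS
  have hTx : ⟪T x, x⟫ ≤ c * ‖x‖ ^ 2 := by
    have := ((LinearMap.le_def _ _).mp hTc).inner_nonneg_left x
    rwa [LinearMap.sub_apply, inner_sub_left, LinearMap.smul_apply, Module.End.one_apply,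
      real_inner_smul_left, real_inner_self_eq_norm_sq, sub_nonneg] at this
  have hSx : 0 ≤ ⟪x, S x⟫ := by simpa [hTS] using hT.inner_nonneg_left (S x)
  rcases eq_or_ne x 0 with rfl | hx
  · simp
  · have := pow_pos (norm_pos_iff.mpr hx) 2
    nlinarith

theorem hasDerivWithinAt_inner_apply_of_gain {x : ℝ → E} {P : ℝ → E →L[ℝ] E}
    {A G : E →L[ℝ] E} {β k : ℝ} {s : Set ℝ} {t : ℝ}
    (hx : HasDerivWithinAt x (-(k • A (G (x t)))) s t)
    (hP : HasDerivWithinAt P (k • G - β • P t) s t)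
    (hA : A.IsSymmetric) (hPA : P t * A = 1) (hAP : A * P t = 1) :
    HasDerivWithinAt (fun τ => ⟪x τ, P τ (x τ)⟫)
      (-β * ⟪x t, P t (x t)⟫ - k * ⟪x t, G (x t)⟫) s t := by
  have hAG : ⟪A (G (x t)), P t (x t)⟫ = ⟪x t, G (x t)⟫ :=
    calc ⟪A (G (x t)), P t (x t)⟫ = ⟪G (x t), (A * P t) (x t)⟫ := hA _ _
      _ = ⟪x t, G (x t)⟫ := by rw [hAP, one_apply_eq_self, real_inner_comm]
  have hPAG : P t (A (G (x t))) = G (x t) := by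
    rw [← mul_apply_eq_comp, hPA, one_apply_eq_self]
  refine (hx.inner ℝ (hP.clm_apply hx)).congr_deriv ?_
  simp only [_root_.sub_apply, _root_.smul_apply, map_neg, map_smul, hPAG, inner_neg_left,
    inner_neg_right, inner_add_right, inner_sub_right, real_inner_smul_left,
    real_inner_smul_right, hAG]
  ring

end PositiveOperator

theorem Matrix.posDef_of_posSemidef_sub_smul_one {n : Type*} [DecidableEq n]
    {M : Matrix n n ℝ} {c : ℝ} (hc : 0 < c) (h : (M - c • 1).PosSemidef) : M.PosDef := by
  simpa using (PosDef.one.smul hc).add_posSemidef h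

section Matrix

variable {n : Type*} [Fintype n] [DecidableEq n]

theorem Matrix.PosDef.norm_sq_le_mul_inner_toEuclideanLin_inv {M : Matrix n n ℝ} {c : ℝ}
    (hM : M.PosDef) (hc : (c • 1 - M).PosSemidef) (x : EuclideanSpace ℝ n) :
    ‖x‖ ^ 2 ≤ c * ⟪x, toEuclideanLin M⁻¹ x⟫ := by
  refine (isPositive_toEuclideanLin_iff.mpr hM.posSemidef).norm_sq_le_mul_inner_of_le_smul_one
    ?_ (fun y => ?_) x
  · rw [LinearMap.le_def]
    simpa [Module.End.one_eq_id] using isPositive_toEuclideanLin_iff.mpr hc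
  · change toEuclideanCLM (𝕜 := ℝ) M (toEuclideanCLM (𝕜 := ℝ) M⁻¹ y) = y
    rw [← mul_apply_eq_comp, ← map_mul,
      mul_nonsing_inv M ((isUnit_iff_isUnit_det M).mp hM.isUnit), map_one,
      one_apply_eq_self]

theorem Matrix.neg_inv_mul_riccati_mul_inv {R : Type*} [CommRing R] {A G : Matrix n n R}
    (hA : IsUnit A) (β k : R) :
    -(A⁻¹ * (β • A - k • (A * G * A)) * A⁻¹) = k • G - β • A⁻¹ := by
  have hdet := (isUnit_iff_isUnit_det A).mp hA
  rw [mul_sub, sub_mul, mul_smul_comm, smul_mul_assoc, nonsing_inv_mul A hdet, one_mul,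
    mul_smul_comm, smul_mul_assoc,
    show A⁻¹ * (A * G * A) * A⁻¹ = (A⁻¹ * A) * G * (A * A⁻¹) by noncomm_ring,
    nonsing_inv_mul A hdet, mul_nonsing_inv A hdet, one_mul, mul_one, neg_sub]

-- The matrices carry the entrywise sup norm, which is not a ring norm, so the inverse is
-- differentiated on the operator side, where `hasFDerivAt_ringInverse` applies.
theorem HasDerivWithinAt.toEuclideanCLM_inv {A : ℝ → Matrix n n ℝ} {A' : Matrix n n ℝ}
    {s : Set ℝ} {t : ℝ} (hA : HasDerivWithinAt A A' s t) (ht : IsUnit (A t)) :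
    HasDerivWithinAt (fun τ => toEuclideanCLM (𝕜 := ℝ) (A τ)⁻¹)
      (-toEuclideanCLM (𝕜 := ℝ) ((A t)⁻¹ * A' * (A t)⁻¹)) s t := by
  let L : Matrix n n ℝ →L[ℝ] (EuclideanSpace ℝ n →L[ℝ] EuclideanSpace ℝ n) :=
    LinearMap.toContinuousLinearMap (toEuclideanCLM (𝕜 := ℝ) (n := n)).toAlgEquiv.toLinearMap
  have hLA : HasDerivWithinAt (fun τ => toEuclideanCLM (𝕜 := ℝ) (A τ))
      (toEuclideanCLM (𝕜 := ℝ) A') s t :=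
    L.hasFDerivAt.comp_hasDerivWithinAt t hA
  simpa only [nonsing_inv_eq_ringInverse, map_ringInverse, map_mul]
    using hLA.ringInverse (ht.map _)

theorem HasDerivWithinAt.toEuclideanCLM_inv_of_riccati {Γ : ℝ → Matrix n n ℝ}
    {G : Matrix n n ℝ} {β k : ℝ} {s : Set ℝ} {t : ℝ}
    (hΓ : HasDerivWithinAt Γ (β • Γ t - k • (Γ t * G * Γ t)) s t) (ht : IsUnit (Γ t)) :
    HasDerivWithinAt (fun τ => toEuclideanCLM (𝕜 := ℝ) (Γ τ)⁻¹)
      (k • toEuclideanCLM (𝕜 := ℝ) G - β • toEuclideanCLM (𝕜 := ℝ) (Γ t)⁻¹) s t := by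
  have h := hΓ.toEuclideanCLM_inv ht
  rwa [← map_neg, neg_inv_mul_riccati_mul_inv ht, map_sub, map_smul, map_smul] at h

theorem HasDerivWithinAt.inner_toEuclideanCLM_inv_of_riccati {Γ : ℝ → Matrix n n ℝ}
    {G : Matrix n n ℝ} {x : ℝ → EuclideanSpace ℝ n} {β k : ℝ} {s : Set ℝ} {t : ℝ}
    (hΓ : HasDerivWithinAt Γ (β • Γ t - k • (Γ t * G * Γ t)) s t)
    (hΓt : (Γ t).IsHermitian) (hunit : IsUnit (Γ t))
    (hx : HasDerivWithinAt x
      (-(k • toEuclideanCLM (𝕜 := ℝ) (Γ t) (toEuclideanCLM (𝕜 := ℝ) G (x t)))) s t) :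
    HasDerivWithinAt (fun τ => ⟪x τ, toEuclideanCLM (𝕜 := ℝ) (Γ τ)⁻¹ (x τ)⟫)
      (-β * ⟪x t, toEuclideanCLM (𝕜 := ℝ) (Γ t)⁻¹ (x t)⟫
        - k * ⟪x t, toEuclideanCLM (𝕜 := ℝ) G (x t)⟫) s t := by
  have hdet := (isUnit_iff_isUnit_det _).mp hunit
  refine hasDerivWithinAt_inner_apply_of_gain hx (hΓ.toEuclideanCLM_inv_of_riccati hunit)
    (isSymmetric_toEuclideanLin_iff.mpr hΓt) ?_ ?_
  · rw [← map_mul, nonsing_inv_mul _ hdet, map_one]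
  · rw [← map_mul, mul_nonsing_inv _ hdet, map_one]

end Matrix

theorem parameter_error_bounded_general {N : ℕ} (t₀ : ℝ)
    (θt : ℝ → EuclideanSpace ℝ (Fin N))
    (Γ 𝒢 : ℝ → Matrix (Fin N) (Fin N) ℝ) (β₁ kθ γlo γhi : ℝ)
    (hkθ : 0 < kθ) (hβ₁ : 0 ≤ β₁) (hγlo : 0 < γlo) (hγ : γlo ≤ γhi)
    (h𝒢 : ∀ t ∈ Ici t₀, (𝒢 t).PosSemidef)
    (hΓ : ∀ t ∈ Ici t₀,
      HasDerivWithinAt Γ (β₁ • Γ t - kθ • (Γ t * 𝒢 t * Γ t)) (Ici t₀) t)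
    (hΓlo : ∀ t ∈ Ici t₀, (Γ t - γlo • (1 : Matrix (Fin N) (Fin N) ℝ)).PosSemidef)
    (hΓhi : ∀ t ∈ Ici t₀, (γhi • (1 : Matrix (Fin N) (Fin N) ℝ) - Γ t).PosSemidef)
    (hθt : ∀ t ∈ Ici t₀,
      HasDerivWithinAt θt
        (-(kθ • Matrix.toEuclideanLin (Γ t) (Matrix.toEuclideanLin (𝒢 t) (θt t))))
        (Ici t₀) t) :
    ∀ t ∈ Ici t₀,
      ‖θt t‖ ≤ Real.sqrt (γhi * (inner ℝ (θt t₀) (Matrix.toEuclideanLin (Γ t₀)⁻¹ (θt t₀)) : ℝ)) := by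
  have hΓpos : ∀ t ∈ Ici t₀, (Γ t).PosDef :=
    fun t ht => posDef_of_posSemidef_sub_smul_one hγlo (hΓlo t ht)
  set V : ℝ → ℝ := fun t => ⟪θt t, toEuclideanCLM (𝕜 := ℝ) (Γ t)⁻¹ (θt t)⟫
  set W : ℝ → ℝ := fun t => ⟪θt t, toEuclideanCLM (𝕜 := ℝ) (𝒢 t) (θt t)⟫
  have hV : ∀ t ∈ Ici t₀, HasDerivWithinAt V (-β₁ * V t - kθ * W t) (Ici t₀) t :=
    fun t ht => (hΓ t ht).inner_toEuclideanCLM_inv_of_riccati (hΓpos t ht).isHermitian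
      (hΓpos t ht).isUnit (hθt t ht)
  have hVanti : AntitoneOn V (Ici t₀) := by
    refine antitoneOn_Ici_of_hasDerivWithinAt_nonpos hV fun t ht => ?_
    have hVt : 0 ≤ V t := (isPositive_toEuclideanLin_iff.mpr
      (hΓpos t (Ioi_subset_Ici_self ht)).inv.posSemidef).inner_nonneg_right _
    have hWt : 0 ≤ W t :=
      (isPositive_toEuclideanLin_iff.mpr (h𝒢 t (Ioi_subset_Ici_self ht))).inner_nonneg_right _
    nlinarith
  intro t ht
  calc ‖θt t‖ = √(‖θt t‖ ^ 2) := (Real.sqrt_sq (norm_nonneg _)).symm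
    _ ≤ √(γhi * V t) :=
      Real.sqrt_le_sqrt ((hΓpos t ht).norm_sq_le_mul_inner_toEuclideanLin_inv (hΓhi t ht) _)
    _ ≤ √(γhi * V t₀) := Real.sqrt_le_sqrt <|
      mul_le_mul_of_nonneg_left (hVanti self_mem_Ici ht ht) (hγlo.le.trans hγ)

/-- Lemma 1: if `θ̃' = −k_θ Γ 𝒢 θ̃` on `[t₀, ∞)` with `k_θ > 0`, `β₁ ≥ 0`, `𝒢(t)` symmetric
positive semidefinite, and `Γ` differentiable, symmetric, satisfying `Γ̇ = β₁ Γ − k_θ Γ 𝒢 Γ`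
and `γ̲ I ⪯ Γ(t) ⪯ γ̄ I` with `0 < γ̲ ≤ γ̄`, then for all `t ≥ t₀`,
`‖θ̃(t)‖ ≤ √(γ̄ · θ̃(t₀)ᵀ Γ(t₀)⁻¹ θ̃(t₀))` (Euclidean norm). -/
theorem parameter_error_bounded {N : ℕ} (t₀ : ℝ)
    (θt : ℝ → EuclideanSpace ℝ (Fin N))
    (Γ 𝒢 : ℝ → Matrix (Fin N) (Fin N) ℝ) (β₁ kθ γlo γhi : ℝ)
    (hkθ : 0 < kθ) (hβ₁ : 0 ≤ β₁) (hγlo : 0 < γlo) (hγ : γlo ≤ γhi)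
    (h𝒢 : ∀ t ∈ Ici t₀, (𝒢 t).PosSemidef)
    (hΓsymm : ∀ t ∈ Ici t₀, (Γ t).IsSymm)
    (hΓ : ∀ t ∈ Ici t₀,
      HasDerivWithinAt Γ (β₁ • Γ t - kθ • (Γ t * 𝒢 t * Γ t)) (Ici t₀) t)
    (hΓlo : ∀ t ∈ Ici t₀, (Γ t - γlo • (1 : Matrix (Fin N) (Fin N) ℝ)).PosSemidef)
    (hΓhi : ∀ t ∈ Ici t₀, (γhi • (1 : Matrix (Fin N) (Fin N) ℝ) - Γ t).PosSemidef)
    (hθt : ∀ t ∈ Ici t₀,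
      HasDerivWithinAt θt
        (-(kθ • Matrix.toEuclideanLin (Γ t) (Matrix.toEuclideanLin (𝒢 t) (θt t))))
        (Ici t₀) t) :
    ∀ t ∈ Ici t₀,
      ‖θt t‖ ≤ Real.sqrt (γhi * (inner ℝ (θt t₀) (Matrix.toEuclideanLin (Γ t₀)⁻¹ (θt t₀)) : ℝ)) :=
  parameter_error_bounded_general t₀ θt Γ 𝒢 β₁ kθ γlo γhi hkθ hβ₁ hγlo hγ h𝒢 hΓ hΓlo hΓhi hθt
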